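/- arXiv:0907.3972 — 7 statements merged into one kernel-verified Lean document; each statement's English description precedes it below -/
import Mathlib

section
/- Let q = 2^r with r ≥ 1, λ the canonical additive character of F_q (λ(x) = (-1)^{tr(x)} with tr the absolute trace to F_2), and β ∈ F_q*. Then the sum over α ∈ F_q \ {0,1} of λ(β/(α²+α)) equals K(λ;β) − 1, where K(λ;β) = Σ_{x ∈ F_q*} λ(x + βx⁻¹) is the Kloosterman sum. -/
open Finset
open scoped Classical

noncomputable instance (p n : ℕ) [Fact p.Prime] : Fintype (GaloisField p n) :=
  Fintype.ofFinite _

/-- The canonical additive character of `𝔽_{2^r}`, valued in `{±1} ⊆ ℤ`: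
`λ(x) = (-1)^{tr(x)}` where `tr` is the absolute trace to `𝔽₂`. -/
noncomputable def lam (r : ℕ) (x : GaloisField 2 r) : ℤ :=
  if Algebra.trace (ZMod 2) (GaloisField 2 r) x = 0 then 1 else -1

/-- The Kloosterman sum `K(λ;β) = Σ_{x ∈ 𝔽_q*} λ(x + β x⁻¹)`. -/
noncomputable def Kl (r : ℕ) (β : GaloisField 2 r) : ℤ :=
  ∑ x ∈ (Finset.univ \ {0} : Finset (GaloisField 2 r)), lam r (x + β * x⁻¹)

/-!
The map `α ↦ α ^ 2 + α` is additive with kernel `{0, 1}`, and its image lies in the trace-zero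
hyperplane; comparing dimensions, it is a two-to-one map onto that hyperplane. So `y` has
`1 + λ y` preimages, and with Lean's `β / 0 = 0`,
`∑_{α ∈ F} λ(β / (α² + α)) = ∑_y (1 + λ y) λ(β / y) = ∑_y λ(β / y) + ∑_y λ(y + β / y) = 0 + (K + 1)`,
where the terms `α = 0, 1` contribute `λ 0 + λ 0 = 2` to the left side.
-/

namespace CharTwo

theorem sq_add_self_eq_sq_add_self_iff {R : Type*} [CommRing R] [NoZeroDivisors R] [CharP R 2]
    {a b : R} : a ^ 2 + a = b ^ 2 + b ↔ a = b ∨ a = b + 1 := by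
  have hfactor : a ^ 2 + a + (b ^ 2 + b) = (a + b) * (a + b + 1) := by
    linear_combination (-a * b) * CharTwo.two_eq_zero (R := R)
  rw [← CharTwo.add_eq_zero, hfactor, mul_eq_zero, add_assoc a b 1, CharTwo.add_eq_zero,
    CharTwo.add_eq_zero]

variable {K : Type*} [Field K] [Algebra (ZMod 2) K]

local notation "tr" => Algebra.trace (ZMod 2) K

instance : CharP K 2 := charP_of_injective_algebraMap' (ZMod 2) 2

theorem trace_sq [Finite K] (x : K) : tr (x ^ 2) = tr x := by
  have h := Algebra.trace_eq_of_algEquiv (FiniteField.frobeniusAlgEquivOfAlgebraic (ZMod 2) K) x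
  rwa [FiniteField.coe_frobeniusAlgEquivOfAlgebraic, ZMod.card] at h

theorem trace_sq_add_self [Finite K] (x : K) : tr (x ^ 2 + x) = 0 := by
  rw [map_add, trace_sq, CharTwo.add_self_eq_zero]

variable (K) in
def artinSchreier : K →ₗ[ZMod 2] K :=
  (FiniteField.frobeniusAlgHom (ZMod 2) K).toLinearMap + LinearMap.id

@[simp]
theorem artinSchreier_apply (x : K) : artinSchreier K x = x ^ 2 + x := by
  simp [artinSchreier, ZMod.card]

theorem ker_artinSchreier : LinearMap.ker (artinSchreier K) = Submodule.span (ZMod 2) {1} := by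
  ext x
  have hroots : x ^ 2 + x = 0 ↔ x = 0 ∨ x = 1 := by
    simpa using sq_add_self_eq_sq_add_self_iff (a := x) (b := 0)
  rw [LinearMap.mem_ker, Submodule.mem_span_singleton, artinSchreier_apply, hroots]
  constructor
  · rintro (rfl | rfl)
    exacts [⟨0, zero_smul _ _⟩, ⟨1, one_smul _ _⟩]
  · rintro ⟨a, rfl⟩
    rcases (by decide : ∀ a : ZMod 2, a = 0 ∨ a = 1) a with rfl | rfl <;> simp

theorem range_artinSchreier [Finite K] :
    LinearMap.range (artinSchreier K) = LinearMap.ker tr := by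
  refine Submodule.eq_of_le_of_finrank_eq ?_ ?_
  · rintro _ ⟨x, rfl⟩
    exact (artinSchreier_apply x).symm ▸ trace_sq_add_self x
  · -- both are hyperplanes: `ker artinSchreier = 𝔽₂` and the trace is onto `𝔽₂`
    have hAS := LinearMap.finrank_range_add_finrank_ker (artinSchreier K)
    have htr := LinearMap.finrank_range_add_finrank_ker tr
    rw [ker_artinSchreier, finrank_span_singleton one_ne_zero] at hAS
    rw [LinearMap.range_eq_top.2 (Algebra.trace_surjective _ _), finrank_top,
      Module.finrank_self] at htr
    omega

theorem exists_sq_add_self_eq_iff [Finite K] (y : K) : (∃ x, x ^ 2 + x = y) ↔ tr y = 0 := by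
  simp [← LinearMap.mem_ker, ← range_artinSchreier]

theorem card_filter_sq_add_self_eq [Fintype K] (y : K) :
    #{x | x ^ 2 + x = y} = if tr y = 0 then 2 else 0 := by
  split_ifs with hy
  · obtain ⟨x₀, rfl⟩ := (exists_sq_add_self_eq_iff y).2 hy
    have hfiber : ({x | x ^ 2 + x = x₀ ^ 2 + x₀} : Finset K) = {x₀, x₀ + 1} := by
      ext x
      simp [sq_add_self_eq_sq_add_self_iff]
    rw [hfiber, card_pair (by simp)]
  · rw [card_eq_zero, filter_eq_empty_iff]
    rintro x - rfl
    exact hy (trace_sq_add_self x)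

end CharTwo

section Character

variable {r : ℕ}

@[simp]
theorem lam_zero : lam r 0 = 1 := by
  simp [lam]

theorem lam_add (a b : GaloisField 2 r) : lam r (a + b) = lam r a * lam r b := by
  unfold lam
  rw [map_add]
  generalize Algebra.trace (ZMod 2) (GaloisField 2 r) a = s
  generalize Algebra.trace (ZMod 2) (GaloisField 2 r) b = t
  revert s t
  decide

theorem sum_lam : ∑ x : GaloisField 2 r, lam r x = 0 := by
  obtain ⟨u, hu⟩ := Algebra.trace_surjective (ZMod 2) (GaloisField 2 r) 1
  have hshift : ∑ x, lam r (x + u) = ∑ x, lam r x := Equiv.sum_comp (Equiv.addRight u) _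
  have hlam_u : lam r u = -1 := by simp [lam, hu]
  simp only [lam_add, hlam_u, mul_neg_one, sum_neg_distrib] at hshift
  linarith

theorem sum_comp_sq_add_self (g : GaloisField 2 r → ℤ) :
    ∑ x, g (x ^ 2 + x) = ∑ y, (1 + lam r y) * g y := by
  rw [← sum_fiberwise univ (fun x => x ^ 2 + x)]
  refine sum_congr rfl fun y _ => ?_
  rw [sum_congr rfl fun x hx => congrArg g (mem_filter.1 hx).2, sum_const,
    CharTwo.card_filter_sq_add_self_eq, lam]
  split_ifs <;> norm_num

theorem sum_lam_div {β : GaloisField 2 r} (hβ : β ≠ 0) : ∑ y, lam r (β / y) = 0 :=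
  (Equiv.sum_comp (Function.Involutive.toPerm _ fun _ => div_div_cancel₀ hβ) _).trans sum_lam

theorem sum_lam_add_div (β : GaloisField 2 r) : ∑ y, lam r (y + β / y) = Kl r β + 1 := by
  rw [Kl, ← sum_sdiff (subset_univ {0}), sum_singleton]
  simp [div_eq_mul_inv]

end Character

theorem stmt0_general (r : ℕ) (β : GaloisField 2 r) (hβ : β ≠ 0) :
    ∑ α ∈ (Finset.univ \ {0, 1} : Finset (GaloisField 2 r)),
      lam r (β / (α ^ 2 + α)) = Kl r β - 1 := by
  have hall : ∑ α, lam r (β / (α ^ 2 + α)) = Kl r β + 1 := by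
    rw [sum_comp_sq_add_self fun y => lam r (β / y)]
    simp only [add_mul, one_mul, ← lam_add, sum_add_distrib, sum_lam_div hβ, sum_lam_add_div,
      zero_add]
  have hzero_one : ∑ α ∈ {0, 1}, lam r (β / (α ^ 2 + α)) = 2 := by
    simp [CharTwo.add_self_eq_zero]
  rw [← sum_sdiff (subset_univ {0, 1}), hzero_one] at hall
  linarith

theorem stmt0 (r : ℕ) (hr : 1 ≤ r) (β : GaloisField 2 r) (hβ : β ≠ 0) :
    ∑ α ∈ (Finset.univ \ {0, 1} : Finset (GaloisField 2 r)),
      lam r (β / (α ^ 2 + α)) = Kl r β - 1 :=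
  stmt0_general r β hβ
end

section
/- Let q be a prime power, λ the canonical additive character of F_q, m ≥ 1, and β ∈ F_q. Then Σ_{a ∈ F_q*} λ(−aβ) K_m(λ;a) equals q·K_{m−1}(λ;β⁻¹) + (−1)^{m+1} if β ≠ 0, and equals (−1)^{m+1} if β = 0, with the convention K₀(λ;γ) = λ(γ). -/
/-!
Expanding `K_m(λ;a)` and exchanging the order of summation, the inner sum over `a ∈ F_q*` of
`λ(a((x₁⋯x_m)⁻¹ - β))` is `q - 1` when `(x₁⋯x_m)⁻¹ = β` and `-1` otherwise, by orthogonality of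
the nontrivial character `λ`. The `-1` terms give `-Σ_x λ(x₁+⋯+x_m) = -(Σ_{t ≠ 0} λ(t))^m =
-(-1)^m`; the tuples with `(x₁⋯x_m)⁻¹ = β` (none if `β = 0`) are parametrised by their first
`m - 1` coordinates, the last being `β⁻¹(x₁⋯x_{m-1})⁻¹`, so they contribute `q K_{m-1}(λ;β⁻¹)`.
-/

open Finset
open scoped Classical

/-- The canonical additive character of `𝔽_{p^r}`:
`λ(x) = exp(2πi · tr(x)/p)` where `tr` is the absolute trace to `𝔽_p`. -/
noncomputable def canChar (p r : ℕ) [Fact p.Prime] (x : GaloisField p r) : ℂ :=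
  Complex.exp (2 * Real.pi * Complex.I *
    (((Algebra.trace (ZMod p) (GaloisField p r) x).val : ℂ)) / p)

/-- The `m`-dimensional Kloosterman sum
`K_m(λ;a) = Σ_{x₁,…,x_m ∈ 𝔽_q*} λ(x₁+⋯+x_m + a x₁⁻¹⋯x_m⁻¹)`.
For `m = 0` this is `λ(a)`, matching the convention `K₀(λ;γ) = λ(γ)`. -/
noncomputable def Km (p r : ℕ) [Fact p.Prime] (m : ℕ) (a : GaloisField p r) : ℂ :=
  ∑ x ∈ Finset.univ.filter (fun x : Fin m → GaloisField p r => ∀ i, x i ≠ 0),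
    canChar p r (∑ i, x i + a * (∏ i, x i)⁻¹)

lemma AddChar.map_sum_eq_prod {ι A M : Type*} [AddCommMonoid A] [CommMonoid M]
    (ψ : AddChar A M) (s : Finset ι) (f : ι → A) :
    ψ (∑ i ∈ s, f i) = ∏ i ∈ s, ψ (f i) :=
  map_prod ψ.toMonoidHom (fun i => Multiplicative.ofAdd (f i)) s

section KloostermanSum

variable {F R : Type*} [Field F] [Fintype F] [CommRing R] [IsDomain R] {ψ : AddChar F R}

lemma AddChar.sum_sdiff_zero_eq_neg_one (hψ : ψ ≠ 1) : ∑ t ∈ univ \ {0}, ψ t = -1 := by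
  rw [sum_sdiff_eq_sub (subset_univ _), AddChar.sum_eq_zero_of_ne_one hψ]
  simp

lemma AddChar.sum_sdiff_zero_mulShift (hψ : ψ ≠ 1) (b : F) :
    ∑ a ∈ univ \ {0}, ψ (a * b) = (if b = 0 then (Fintype.card F : R) else 0) - 1 := by
  rw [sum_sdiff_eq_sub (subset_univ _),
    AddChar.sum_mulShift b (AddChar.IsPrimitive.of_ne_one hψ)]
  simp

variable (F) in
noncomputable def nonzeroTuples (m : ℕ) : Finset (Fin m → F) :=
  univ.filter fun x => ∀ i, x i ≠ 0

lemma mem_nonzeroTuples {m : ℕ} {x : Fin m → F} : x ∈ nonzeroTuples F m ↔ ∀ i, x i ≠ 0 := by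
  simp [nonzeroTuples]

noncomputable def kloostermanSum (ψ : AddChar F R) (m : ℕ) (a : F) : R :=
  ∑ x ∈ nonzeroTuples F m, ψ (∑ i, x i + a * (∏ i, x i)⁻¹)

lemma sum_nonzeroTuples_char_sum (hψ : ψ ≠ 1) (m : ℕ) :
    ∑ x ∈ nonzeroTuples F m, ψ (∑ i, x i) = (-1) ^ m := by
  have hpi : nonzeroTuples F m = Fintype.piFinset fun _ => univ \ {0} := by
    ext x; simp [mem_nonzeroTuples]
  simp only [hpi, AddChar.map_sum_eq_prod, ← prod_univ_sum,
    AddChar.sum_sdiff_zero_eq_neg_one hψ, prod_const, card_univ, Fintype.card_fin]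

lemma mem_filter_nonzeroTuples_prod_inv_eq_iff {n : ℕ} {x : Fin (n + 1) → F} {β : F}
    (hβ : β ≠ 0) :
    x ∈ (nonzeroTuples F (n + 1)).filter (fun x => (∏ i, x i)⁻¹ = β) ↔
      Fin.init x ∈ nonzeroTuples F n ∧ x (Fin.last n) = β⁻¹ * (∏ i, Fin.init x i)⁻¹ := by
  simp only [mem_filter, mem_nonzeroTuples, Fin.forall_fin_succ', Fin.init]
  constructor
  · rintro ⟨⟨hinit, hlast⟩, hprod⟩
    have hP : ∏ i : Fin n, x i.castSucc ≠ 0 := prod_ne_zero_iff.mpr fun i _ => hinit i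
    refine ⟨hinit, ?_⟩
    rw [← hprod, Fin.prod_univ_castSucc]
    field_simp
  · rintro ⟨hinit, hlast⟩
    have hP : ∏ i : Fin n, x i.castSucc ≠ 0 := prod_ne_zero_iff.mpr fun i _ => hinit i
    refine ⟨⟨hinit, by simp [hlast, hβ, hP]⟩, ?_⟩
    rw [Fin.prod_univ_castSucc, hlast]
    field_simp

lemma sum_filter_prod_inv_eq_nonzeroTuples_succ {M : Type*} [AddCommMonoid M] (f : F → M)
    (n : ℕ) {β : F} (hβ : β ≠ 0) :
    ∑ x ∈ (nonzeroTuples F (n + 1)).filter (fun x => (∏ i, x i)⁻¹ = β), f (∑ i, x i) =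
      ∑ y ∈ nonzeroTuples F n, f (∑ i, y i + β⁻¹ * (∏ i, y i)⁻¹) := by
  have hmem (x : Fin (n + 1) → F) := mem_filter_nonzeroTuples_prod_inv_eq_iff (x := x) hβ
  refine sum_nbij' Fin.init (fun y => Fin.snoc y (β⁻¹ * (∏ i, y i)⁻¹)) ?_ ?_ ?_ ?_ ?_
  · exact fun x hx => ((hmem x).mp hx).1
  · intro y hy
    exact (hmem _).mpr (by simpa [Fin.init_snoc] using hy)
  · intro x hx
    rw [← ((hmem x).mp hx).2]
    exact Fin.snoc_init_self x
  · exact fun y _ => Fin.init_snoc _ _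
  · intro x hx
    rw [Fin.sum_univ_castSucc, ((hmem x).mp hx).2]
    rfl

lemma sum_sdiff_zero_char_mul_kloostermanSum (hψ : ψ ≠ 1) (m : ℕ) (γ : F) :
    ∑ a ∈ univ \ {0}, ψ (-a * γ) * kloostermanSum ψ m a =
      Fintype.card F * ∑ x ∈ (nonzeroTuples F m).filter (fun x => (∏ i, x i)⁻¹ = γ),
        ψ (∑ i, x i) - (-1) ^ m := by
  calc ∑ a ∈ univ \ {0}, ψ (-a * γ) * kloostermanSum ψ m a
      = ∑ x ∈ nonzeroTuples F m,
          ψ (∑ i, x i) * ∑ a ∈ univ \ {0}, ψ (a * ((∏ i, x i)⁻¹ - γ)) := by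
        simp only [kloostermanSum, mul_sum, ← AddChar.map_add_eq_mul]
        rw [sum_comm]
        refine sum_congr rfl fun x _ => sum_congr rfl fun a _ => congrArg ψ (by ring)
    _ = ∑ x ∈ nonzeroTuples F m, ((if (∏ i, x i)⁻¹ = γ then Fintype.card F * ψ (∑ i, x i)
          else 0) - ψ (∑ i, x i)) := by
        refine sum_congr rfl fun x _ => ?_
        rw [AddChar.sum_sdiff_zero_mulShift hψ, sub_eq_zero]
        split_ifs <;> ring
    _ = _ := by
        rw [sum_sub_distrib, sum_nonzeroTuples_char_sum hψ, ← sum_filter, mul_sum]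

theorem sum_sdiff_zero_char_mul_kloostermanSum_succ (hψ : ψ ≠ 1) (n : ℕ) {β : F} (hβ : β ≠ 0) :
    ∑ a ∈ univ \ {0}, ψ (-a * β) * kloostermanSum ψ (n + 1) a =
      Fintype.card F * kloostermanSum ψ n β⁻¹ + (-1) ^ (n + 1 + 1) := by
  rw [sum_sdiff_zero_char_mul_kloostermanSum hψ,
    sum_filter_prod_inv_eq_nonzeroTuples_succ _ n hβ, kloostermanSum, pow_succ _ (n + 1)]
  ring

theorem sum_sdiff_zero_kloostermanSum (hψ : ψ ≠ 1) (m : ℕ) :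
    ∑ a ∈ univ \ {0}, kloostermanSum ψ m a = (-1) ^ (m + 1) := by
  have hempty : (nonzeroTuples F m).filter (fun x => (∏ i, x i)⁻¹ = 0) = ∅ :=
    filter_eq_empty_iff.mpr fun x hx => inv_ne_zero <| prod_ne_zero_iff.mpr
      fun i _ => mem_nonzeroTuples.mp hx i
  have h := sum_sdiff_zero_char_mul_kloostermanSum hψ m (0 : F)
  rw [hempty, sum_empty] at h
  simpa [pow_succ] using h

end KloostermanSum

section CanonicalCharacter

variable (p r : ℕ) [Fact p.Prime]

noncomputable def canonicalAddChar : AddChar (GaloisField p r) ℂ :=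
  (AddChar.zmodChar p
    (Complex.isPrimitiveRoot_exp p (Fact.out : p.Prime).ne_zero).pow_eq_one).compAddMonoidHom
    (Algebra.trace (ZMod p) (GaloisField p r)).toAddMonoidHom

lemma canChar_eq_canonicalAddChar : canChar p r = canonicalAddChar p r := by
  ext x
  simp only [canonicalAddChar, AddChar.compAddMonoidHom_apply, AddChar.zmodChar_apply,
    LinearMap.toAddMonoidHom_coe, canChar, ← Complex.exp_nat_mul]
  ring_nf

lemma canonicalAddChar_ne_one : canonicalAddChar p r ≠ 1 := by
  have hp : p.Prime := Fact.out
  obtain ⟨b, hb⟩ := Algebra.trace_surjective (ZMod p) (GaloisField p r) 1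
  refine AddChar.ne_one_iff.mpr ⟨b, ?_⟩
  rw [canonicalAddChar, AddChar.compAddMonoidHom_apply, AddChar.zmodChar_apply,
    LinearMap.toAddMonoidHom_coe, hb, ZMod.val_one, pow_one]
  exact (Complex.isPrimitiveRoot_exp p hp.ne_zero).ne_one hp.one_lt

lemma Km_eq_kloostermanSum (m : ℕ) : Km p r m = kloostermanSum (canonicalAddChar p r) m := by
  ext a
  simp only [Km, kloostermanSum, nonzeroTuples, canChar_eq_canonicalAddChar]

lemma card_galoisField (hr : 1 ≤ r) : (Fintype.card (GaloisField p r) : ℂ) = (p : ℂ) ^ r := by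
  rw [← Nat.card_eq_fintype_card, GaloisField.card p r (by omega)]
  push_cast
  ring

end CanonicalCharacter

theorem stmt4 (p r : ℕ) [Fact p.Prime] (hr : 1 ≤ r) (m : ℕ) (hm : 1 ≤ m)
    (β : GaloisField p r) :
    (β ≠ 0 →
      ∑ a ∈ (Finset.univ \ {0} : Finset (GaloisField p r)),
          canChar p r (-a * β) * Km p r m a =
        (p : ℂ) ^ r * Km p r (m - 1) β⁻¹ + (-1 : ℂ) ^ (m + 1)) ∧
    (β = 0 →
      ∑ a ∈ (Finset.univ \ {0} : Finset (GaloisField p r)),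
          canChar p r (-a * β) * Km p r m a = (-1 : ℂ) ^ (m + 1)) := by
  obtain ⟨n, rfl⟩ := Nat.exists_eq_add_of_le' hm
  simp only [Km_eq_kloostermanSum, canChar_eq_canonicalAddChar, Nat.add_sub_cancel]
  refine ⟨fun hβ => ?_, fun hβ => ?_⟩
  · rw [sum_sdiff_zero_char_mul_kloostermanSum_succ (canonicalAddChar_ne_one p r) n hβ,
      card_galoisField p r hr]
  · simpa [hβ] using sum_sdiff_zero_kloostermanSum (canonicalAddChar_ne_one p r) (n + 1)
end

section
/- Let q = 2^r. The number s_r of r×r nonsingular symmetric matrices over F_q is q^{r(r+2)/4} Π_{j=1}^{r/2}(q^{2j−1}−1) if r is even, and q^{(r²−1)/4} Π_{j=1}^{(r+1)/2}(q^{2j−1}−1) if r is odd. -/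
set_option linter.unusedSectionVars false
set_option maxHeartbeats 1000000

open Finset
open scoped Classical

namespace SymCnt

open Matrix Sum

variable {K : Type*} [Field K] [Fintype K]

noncomputable def sc (K : Type*) [Field K] [Fintype K] (n : ℕ) : ℕ :=
  Nat.card {M : Matrix (Fin n) (Fin n) K // M.IsSymm ∧ IsUnit M}

lemma sc_zero : sc K 0 = 1 := by
  have h : ∀ M N : Matrix (Fin 0) (Fin 0) K, M = N := by
    intro M N; ext i; exact i.elim0
  haveI : Nonempty {M : Matrix (Fin 0) (Fin 0) K // M.IsSymm ∧ IsUnit M} := by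
    refine ⟨⟨0, h _ _, ?_⟩⟩
    rw [Matrix.isUnit_iff_isUnit_det, Matrix.det_fin_zero]
    exact isUnit_one
  haveI : Subsingleton {M : Matrix (Fin 0) (Fin 0) K // M.IsSymm ∧ IsUnit M} :=
    ⟨fun M N => Subtype.ext (h _ _)⟩
  exact Nat.card_unique

lemma sc_one : sc K 1 = Nat.card K - 1 := by
  have e : {M : Matrix (Fin 1) (Fin 1) K // M.IsSymm ∧ IsUnit M} ≃ {x : K // ¬ (x = 0)} := by
    refine
      { toFun := fun M => ⟨M.1 0 0, ?_⟩
        invFun := fun x => ⟨Matrix.of fun _ _ => x.1, ?_, ?_⟩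
        left_inv := ?_
        right_inv := ?_ }
    · have := M.2.2
      rw [Matrix.isUnit_iff_isUnit_det, Matrix.det_fin_one, isUnit_iff_ne_zero] at this
      exact this
    · show _ = _
      ext i j
      rfl
    · rw [Matrix.isUnit_iff_isUnit_det, Matrix.det_fin_one, isUnit_iff_ne_zero]
      exact x.2
    · intro M
      apply Subtype.ext
      ext i j
      rw [Subsingleton.elim i 0, Subsingleton.elim j 0]
      rfl
    · intro x; rfl
  rw [sc, Nat.card_congr e, Nat.card_eq_fintype_card, Nat.card_eq_fintype_card,
    Fintype.card_subtype_compl, Fintype.card_subtype_eq]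

section Reindex
variable {ι κ : Type*} [Fintype ι] [Fintype κ] [DecidableEq ι] [DecidableEq κ]

lemma isSymm_reindex_iff (e : ι ≃ κ) (M : Matrix ι ι K) :
    (Matrix.reindex e e M).IsSymm ↔ M.IsSymm := by
  constructor
  · intro h
    have := h.submatrix (e : ι → κ)
    simpa [Matrix.reindex_apply] using this
  · intro h
    exact h.submatrix _

lemma isUnit_reindex_iff (e : ι ≃ κ) (M : Matrix ι ι K) :
    IsUnit (Matrix.reindex e e M) ↔ IsUnit M := by
  rw [Matrix.isUnit_iff_isUnit_det, Matrix.isUnit_iff_isUnit_det, Matrix.reindex_apply,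
    Matrix.det_submatrix_equiv_self]

lemma card_reindex (e : ι ≃ κ) :
    Nat.card {M : Matrix ι ι K // M.IsSymm ∧ IsUnit M}
      = Nat.card {M : Matrix κ κ K // M.IsSymm ∧ IsUnit M} := by
  refine Nat.card_congr (Equiv.subtypeEquiv (Matrix.reindex e e) fun M => ?_)
  rw [isSymm_reindex_iff, isUnit_reindex_iff]

end Reindex

lemma card_border_ne {γ : Type*} [Fintype γ] [DecidableEq γ] (w : γ → K) (c : K) (hc : c ≠ 0) :
    Nat.card {M : Matrix (γ ⊕ Fin 1) (γ ⊕ Fin 1) K //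
        (M.IsSymm ∧ IsUnit M) ∧ (∀ j, M (inr 0) (inl j) = w j) ∧ M (inr 0) (inr 0) = c}
      = Nat.card {S : Matrix γ γ K // S.IsSymm ∧ IsUnit S} := by
  classical
  set Bw : Matrix γ (Fin 1) K := Matrix.of fun k _ => w k with hBw
  set Cw : Matrix (Fin 1) γ K := Matrix.of fun _ k => w k with hCw
  set Ec : Matrix (Fin 1) (Fin 1) K := Matrix.of fun _ _ => c with hEc
  set Ei : Matrix (Fin 1) (Fin 1) K := Matrix.of fun _ _ => c⁻¹ with hEi
  have h1 : Ei * Ec = 1 := by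
    ext i j
    simp [hEi, hEc, Matrix.mul_apply, Fin.sum_univ_one, Matrix.one_apply,
      Subsingleton.elim i j, inv_mul_cancel₀ hc]
  have h2 : Ec * Ei = 1 := by
    ext i j
    simp [hEi, hEc, Matrix.mul_apply, Fin.sum_univ_one, Matrix.one_apply,
      Subsingleton.elim i j, mul_inv_cancel₀ hc]
  letI iEc : Invertible Ec := ⟨Ei, h1, h2⟩
  have hinv : ⅟Ec = Ei := rfl
  set X : Matrix γ γ K := Bw * Ei * Cw with hX
  have hCwT : Cwᵀ = Bw := by ext i j; rfl
  have hBwT : Bwᵀ = Cw := by ext i j; rfl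
  have hEcT : Ecᵀ = Ec := by ext i j; rfl
  have hEiT : Eiᵀ = Ei := by ext i j; rfl
  have hXsymm : X.IsSymm := by
    show Xᵀ = X
    rw [hX, Matrix.transpose_mul, Matrix.transpose_mul, hCwT, hEiT, hBwT, Matrix.mul_assoc]
  have hdetEc : Ec.det = c := by rw [Matrix.det_fin_one]; rfl
  have hdet : ∀ A : Matrix γ γ K, IsUnit (fromBlocks A Bw Cw Ec) ↔ IsUnit (A - X) := by
    intro A
    rw [Matrix.isUnit_iff_isUnit_det, Matrix.det_fromBlocks₂₂, hinv, ← hX, hdetEc,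
      Matrix.isUnit_iff_isUnit_det (A - X), isUnit_iff_ne_zero, isUnit_iff_ne_zero,
      mul_ne_zero_iff]
    exact ⟨fun h => h.2, fun h => ⟨hc, h⟩⟩
  have key : ∀ M : Matrix (γ ⊕ Fin 1) (γ ⊕ Fin 1) K, M.IsSymm →
      (∀ j, M (inr 0) (inl j) = w j) → M (inr 0) (inr 0) = c →
      fromBlocks M.toBlocks₁₁ Bw Cw Ec = M := by
    intro M hs hr hcc
    ext i j
    rcases i with i | i <;> rcases j with j | j
    · rfl
    · have hj : j = 0 := Subsingleton.elim _ _
      subst hj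
      show w i = M (inl i) (inr 0)
      rw [hs.apply (inr 0) (inl i), hr]
    · have hi : i = 0 := Subsingleton.elim _ _
      subst hi
      exact (hr j).symm
    · have hj : j = 0 := Subsingleton.elim _ _
      have hi : i = 0 := Subsingleton.elim _ _
      subst hj; subst hi
      exact hcc.symm
  have symm11 : ∀ M : Matrix (γ ⊕ Fin 1) (γ ⊕ Fin 1) K, M.IsSymm → (M.toBlocks₁₁).IsSymm := by
    intro M hs
    have : M.toBlocks₁₁ = M.submatrix inl inl := rfl
    rw [this]
    exact hs.submatrix _
  refine Nat.card_congr ?_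
  refine
    { toFun := fun M => ⟨M.1.toBlocks₁₁ - X, ?_, ?_⟩
      invFun := fun S => ⟨fromBlocks (S.1 + X) Bw Cw Ec, ⟨?_, ?_⟩, ?_, ?_⟩
      left_inv := ?_
      right_inv := ?_ }
  · exact (symm11 _ M.2.1.1).sub hXsymm
  · rw [← hdet]
    rw [key M.1 M.2.1.1 M.2.2.1 M.2.2.2]
    exact M.2.1.2
  · show (fromBlocks (S.1 + X) Bw Cw Ec)ᵀ = _
    rw [fromBlocks_transpose, hCwT, hBwT, hEcT, Matrix.transpose_add, hXsymm,
      show (S.1)ᵀ = S.1 from S.2.1]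
  · rw [hdet, add_sub_cancel_right]
    exact S.2.2
  · intro j
    rfl
  · rfl
  · intro M
    apply Subtype.ext
    show fromBlocks (M.1.toBlocks₁₁ - X + X) Bw Cw Ec = M.1
    rw [sub_add_cancel]
    exact key M.1 M.2.1.1 M.2.2.1 M.2.2.2
  · intro S
    apply Subtype.ext
    show (fromBlocks (S.1 + X) Bw Cw Ec).toBlocks₁₁ - X = S.1
    rw [Matrix.toBlocks_fromBlocks₁₁, add_sub_cancel_right]

lemma symm11 {γ δ : Type*} (M : Matrix (γ ⊕ δ) (γ ⊕ δ) K) (hs : M.IsSymm) :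
    (M.toBlocks₁₁).IsSymm := by
  have : M.toBlocks₁₁ = M.submatrix inl inl := rfl
  rw [this]
  exact hs.submatrix _

lemma card_border_zero {γ : Type*} [Fintype γ] [DecidableEq γ] (w : γ → K) (x : K) (hx : x ≠ 0) :
    Nat.card {M : Matrix (γ ⊕ (Fin 1 ⊕ Fin 1)) (γ ⊕ (Fin 1 ⊕ Fin 1)) K //
      (M.IsSymm ∧ IsUnit M) ∧ (∀ k, M (inr (inr 0)) (inl k) = w k)
        ∧ M (inr (inr 0)) (inr (inl 0)) = x
        ∧ M (inr (inr 0)) (inr (inr 0)) = 0} =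
    (Nat.card K * Nat.card K ^ Fintype.card γ)
      * Nat.card {S : Matrix γ γ K // S.IsSymm ∧ IsUnit S} := by
  classical
  let E : K → Matrix (Fin 1 ⊕ Fin 1) (Fin 1 ⊕ Fin 1) K := fun a =>
    Matrix.fromBlocks (Matrix.of fun _ _ => a) (Matrix.of fun _ _ => x)
      (Matrix.of fun _ _ => x) 0
  let Ei : K → Matrix (Fin 1 ⊕ Fin 1) (Fin 1 ⊕ Fin 1) K := fun a =>
    Matrix.fromBlocks 0 (Matrix.of fun _ _ => x⁻¹)
      (Matrix.of fun _ _ => x⁻¹) (Matrix.of fun _ _ => -(a * (x⁻¹ * x⁻¹)))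
  have h1 : ∀ a, Ei a * E a = 1 := by
    intro a
    ext i j
    rcases i with i | i <;> rcases j with j | j <;>
      rw [Subsingleton.elim i 0, Subsingleton.elim j 0] <;>
      · simp [E, Ei, Matrix.mul_apply, Fintype.sum_sum_type, Fin.sum_univ_one,
          Matrix.one_apply, inv_mul_cancel₀ hx]
        try field_simp
        try ring
  have h2 : ∀ a, E a * Ei a = 1 := by
    intro a
    ext i j
    rcases i with i | i <;> rcases j with j | j <;>
      rw [Subsingleton.elim i 0, Subsingleton.elim j 0] <;>
      · simp [E, Ei, Matrix.mul_apply, Fintype.sum_sum_type, Fin.sum_univ_one,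
          Matrix.one_apply, mul_inv_cancel₀ hx]
        try field_simp
        try ring
  let B : (γ → K) → Matrix γ (Fin 1 ⊕ Fin 1) K := fun u =>
    Matrix.of fun k j => Sum.elim (fun _ => u k) (fun _ => w k) j
  let X : K → (γ → K) → Matrix γ γ K := fun a u => B u * Ei a * (B u)ᵀ
  have hEsymm : ∀ a, (E a)ᵀ = E a := by
    intro a; ext i j
    rcases i with i | i <;> rcases j with j | j <;> rfl
  have hEisymm : ∀ a, (Ei a)ᵀ = Ei a := by
    intro a; ext i j
    rcases i with i | i <;> rcases j with j | j <;> rfl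
  have hXsymm : ∀ a u, (X a u).IsSymm := by
    intro a u
    show (X a u)ᵀ = X a u
    show (B u * Ei a * (B u)ᵀ)ᵀ = _
    rw [Matrix.transpose_mul, Matrix.transpose_mul, Matrix.transpose_transpose, hEisymm,
      ← Matrix.mul_assoc]
  have hdet : ∀ a u (A : Matrix γ γ K),
      IsUnit (fromBlocks A (B u) (B u)ᵀ (E a)) ↔ IsUnit (A - X a u) := by
    intro a u A
    letI : Invertible (E a) := ⟨Ei a, h1 a, h2 a⟩
    have hXeq : B u * ⅟(E a) * (B u)ᵀ = X a u := rfl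
    have hdE : IsUnit (E a).det := Matrix.isUnit_det_of_invertible _
    rw [Matrix.isUnit_iff_isUnit_det, Matrix.det_fromBlocks₂₂, hXeq,
      Matrix.isUnit_iff_isUnit_det (A - X a u), IsUnit.mul_iff]
    exact ⟨fun h => h.2, fun h => ⟨hdE, h⟩⟩
  have key : ∀ M : Matrix (γ ⊕ (Fin 1 ⊕ Fin 1)) (γ ⊕ (Fin 1 ⊕ Fin 1)) K, M.IsSymm →
      (∀ k, M (inr (inr 0)) (inl k) = w k) → M (inr (inr 0)) (inr (inl 0)) = x →
      M (inr (inr 0)) (inr (inr 0)) = 0 →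
      fromBlocks M.toBlocks₁₁ (B (fun k => M (inl k) (inr (inl 0))))
        (B (fun k => M (inl k) (inr (inl 0))))ᵀ (E (M (inr (inl 0)) (inr (inl 0)))) = M := by
    intro M hs hr hxc h0c
    ext i j
    rcases i with i | i | i <;> rcases j with j | j | j
    · rfl
    · rw [Subsingleton.elim j 0]; rfl
    · rw [Subsingleton.elim j 0]
      show w i = M (inl i) (inr (inr 0))
      rw [hs.apply (inr (inr 0)) (inl i), hr]
    · rw [Subsingleton.elim i 0]
      show M (inl j) (inr (inl 0)) = M (inr (inl 0)) (inl j)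
      rw [hs.apply (inr (inl 0)) (inl j)]
    · rw [Subsingleton.elim i 0, Subsingleton.elim j 0]; rfl
    · rw [Subsingleton.elim i 0, Subsingleton.elim j 0]
      show x = M (inr (inl 0)) (inr (inr 0))
      rw [hs.apply (inr (inr 0)) (inr (inl 0)), hxc]
    · rw [Subsingleton.elim i 0]
      exact (hr j).symm
    · rw [Subsingleton.elim i 0, Subsingleton.elim j 0]
      exact hxc.symm
    · rw [Subsingleton.elim i 0, Subsingleton.elim j 0]
      show (0 : K) = M (inr (inr 0)) (inr (inr 0))
      exact h0c.symm
  have main : {M : Matrix (γ ⊕ (Fin 1 ⊕ Fin 1)) (γ ⊕ (Fin 1 ⊕ Fin 1)) K //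
      (M.IsSymm ∧ IsUnit M) ∧ (∀ k, M (inr (inr 0)) (inl k) = w k)
        ∧ M (inr (inr 0)) (inr (inl 0)) = x
        ∧ M (inr (inr 0)) (inr (inr 0)) = 0} ≃
      ((K × (γ → K)) × {S : Matrix γ γ K // S.IsSymm ∧ IsUnit S}) := by
    refine
      { toFun := fun M => ⟨(M.1 (inr (inl 0)) (inr (inl 0)), fun k => M.1 (inl k) (inr (inl 0))),
          ⟨M.1.toBlocks₁₁ - X (M.1 (inr (inl 0)) (inr (inl 0)))
            (fun k => M.1 (inl k) (inr (inl 0))), ?_, ?_⟩⟩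
        invFun := fun P => ⟨fromBlocks (P.2.1 + X P.1.1 P.1.2) (B P.1.2) (B P.1.2)ᵀ (E P.1.1),
          ⟨?_, ?_⟩, ?_, ?_, ?_⟩
        left_inv := ?_
        right_inv := ?_ }
    · exact (symm11 _ M.2.1.1).sub (hXsymm _ _)
    · refine (hdet _ _ _).mp ?_
      rw [key M.1 M.2.1.1 M.2.2.1 M.2.2.2.1 M.2.2.2.2]
      exact M.2.1.2
    · show (fromBlocks _ _ _ _)ᵀ = _
      rw [fromBlocks_transpose, Matrix.transpose_transpose, hEsymm, Matrix.transpose_add,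
        hXsymm, show (P.2.1)ᵀ = P.2.1 from P.2.2.1]
    · rw [hdet, add_sub_cancel_right]
      exact P.2.2.2
    · intro k; rfl
    · rfl
    · show (0 : Matrix (Fin 1) (Fin 1) K) 0 0 = 0
      simp
    · intro M
      apply Subtype.ext
      show fromBlocks (M.1.toBlocks₁₁
          - X (M.1 (inr (inl 0)) (inr (inl 0))) (fun k => M.1 (inl k) (inr (inl 0)))
          + X (M.1 (inr (inl 0)) (inr (inl 0))) (fun k => M.1 (inl k) (inr (inl 0)))) _ _ _ = M.1
      rw [sub_add_cancel]
      exact key M.1 M.2.1.1 M.2.2.1 M.2.2.2.1 M.2.2.2.2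
    · intro P
      refine Prod.ext rfl (Subtype.ext ?_)
      show (fromBlocks (P.2.1 + X P.1.1 P.1.2) (B P.1.2) (B P.1.2)ᵀ
        (E P.1.1)).toBlocks₁₁ - X P.1.1 P.1.2 = P.2.1
      rw [Matrix.toBlocks_fromBlocks₁₁, add_sub_cancel_right]
  rw [Nat.card_congr main, Nat.card_prod, Nat.card_prod, Nat.card_fun,
    Nat.card_eq_fintype_card (α := γ)]

lemma fiber_zero_card (n : ℕ) (b : Fin (n+1) → K) (hb : b ≠ 0) :
    Nat.card {M : Matrix (Fin (n+1) ⊕ Fin 1) (Fin (n+1) ⊕ Fin 1) K //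
      (M.IsSymm ∧ IsUnit M) ∧ (∀ j, M (inr 0) (inl j) = b j) ∧ M (inr 0) (inr 0) = 0}
    = Nat.card K ^ (n+1) * sc K n := by
  obtain ⟨i, hi⟩ : ∃ i, b i ≠ 0 := by
    by_contra h; push_neg at h; exact hb (funext h)
  set σ : Fin (n+1) ≃ (Fin n ⊕ Fin 1) :=
    (Equiv.swap i (Fin.last n)).trans finSumFinEquiv.symm with hσ
  have hσi : σ i = inr 0 := by
    simp [hσ, Equiv.swap_apply_left, finSumFinEquiv_symm_last]
  have hσsi : σ.symm (inr 0) = i := by rw [← hσi, Equiv.symm_apply_apply]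
  set EE : (Fin (n+1) ⊕ Fin 1) ≃ (Fin n ⊕ (Fin 1 ⊕ Fin 1)) :=
    (Equiv.sumCongr σ (Equiv.refl (Fin 1))).trans (Equiv.sumAssoc (Fin n) (Fin 1) (Fin 1))
    with hEE
  have hEEl : ∀ k : Fin n, EE.symm (inl k) = inl (σ.symm (inl k)) := by
    intro k; simp [hEE]
  have hEEm : EE.symm (inr (inl 0)) = inl i := by simp [hEE, hσsi]
  have hEEr : EE.symm (inr (inr 0)) = inr 0 := by simp [hEE]
  have hN : ∀ (M : Matrix (Fin (n+1) ⊕ Fin 1) (Fin (n+1) ⊕ Fin 1) K) r c,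
      (Matrix.reindex EE EE M) r c = M (EE.symm r) (EE.symm c) := fun _ _ _ => rfl
  have e2 : {M : Matrix (Fin (n+1) ⊕ Fin 1) (Fin (n+1) ⊕ Fin 1) K //
      (M.IsSymm ∧ IsUnit M) ∧ (∀ j, M (inr 0) (inl j) = b j) ∧ M (inr 0) (inr 0) = 0} ≃
      {M : Matrix (Fin n ⊕ (Fin 1 ⊕ Fin 1)) (Fin n ⊕ (Fin 1 ⊕ Fin 1)) K //
      (M.IsSymm ∧ IsUnit M) ∧ (∀ k, M (inr (inr 0)) (inl k) = b (σ.symm (inl k)))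
        ∧ M (inr (inr 0)) (inr (inl 0)) = b i
        ∧ M (inr (inr 0)) (inr (inr 0)) = 0} := by
    refine Equiv.subtypeEquiv (Matrix.reindex EE EE) fun M => ?_
    constructor
    · rintro ⟨⟨hs, hu⟩, hrow, hcorner⟩
      refine ⟨⟨(isSymm_reindex_iff EE M).2 hs, (isUnit_reindex_iff EE M).2 hu⟩, ?_, ?_, ?_⟩
      · intro k; rw [hN, hEEr, hEEl]; exact hrow _
      · rw [hN, hEEr, hEEm]; exact hrow i
      · rw [hN, hEEr]; exact hcorner
    · rintro ⟨⟨hs, hu⟩, hrow, hx, hcorner⟩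
      refine ⟨⟨(isSymm_reindex_iff EE M).1 hs, (isUnit_reindex_iff EE M).1 hu⟩, ?_, ?_⟩
      · intro j
        rcases hσj : σ j with k | v
        · have hj : j = σ.symm (inl k) := by rw [← hσj, Equiv.symm_apply_apply]
          have h' := hrow k
          rw [hN, hEEr, hEEl] at h'
          rw [hj]; exact h'
        · have hj : j = i := by
            have : σ.symm (σ j) = j := Equiv.symm_apply_apply _ _
            rw [hσj, Subsingleton.elim v 0, hσsi] at this
            exact this.symm
          rw [hN, hEEr, hEEm] at hx
          rw [hj]; exact hx
      · rw [hN, hEEr] at hcorner; exact hcorner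
  rw [Nat.card_congr e2, card_border_zero _ _ hi]
  show (Nat.card K * Nat.card K ^ Fintype.card (Fin n)) * sc K n = _
  rw [Fintype.card_fin]
  ring

lemma sc_rec (n : ℕ) :
    sc K (n + 2) = (Nat.card K - 1) * (Nat.card K ^ (n+1) * sc K (n+1))
      + (Nat.card K ^ (n+1) - 1) * (Nat.card K ^ (n+1) * sc K n) := by
  classical
  have h1 : sc K (n+2) = Nat.card {M : Matrix (Fin (n+1) ⊕ Fin 1) (Fin (n+1) ⊕ Fin 1) K //
      M.IsSymm ∧ IsUnit M} :=
    (card_reindex (K := K) (finSumFinEquiv : (Fin (n+1) ⊕ Fin 1) ≃ Fin (n+2))).symm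
  set F : K × (Fin (n+1) → K) → ℕ := fun cb =>
    Nat.card {M : Matrix (Fin (n+1) ⊕ Fin 1) (Fin (n+1) ⊕ Fin 1) K //
      (M.IsSymm ∧ IsUnit M) ∧ (∀ j, M (inr 0) (inl j) = cb.2 j) ∧ M (inr 0) (inr 0) = cb.1}
    with hF
  have h2 : sc K (n+2) = ∑ cb : K × (Fin (n+1) → K), F cb := by
    rw [h1, Nat.card_eq_fintype_card]
    set fhat : {M : Matrix (Fin (n+1) ⊕ Fin 1) (Fin (n+1) ⊕ Fin 1) K // M.IsSymm ∧ IsUnit M}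
        → K × (Fin (n+1) → K) :=
      fun x => (x.1 (inr 0) (inr 0), fun j => x.1 (inr 0) (inl j)) with hfhat
    haveI : ∀ cb, Fintype {x : {M : Matrix (Fin (n+1) ⊕ Fin 1) (Fin (n+1) ⊕ Fin 1) K //
        M.IsSymm ∧ IsUnit M} // fhat x = cb} := fun cb => Fintype.ofFinite _
    rw [Fintype.card_congr (Equiv.sigmaFiberEquiv fhat).symm, Fintype.card_sigma]
    refine Finset.sum_congr rfl fun cb _ => ?_
    rw [hF, ← Nat.card_eq_fintype_card]
    refine Nat.card_congr ?_
    refine (Equiv.subtypeEquivRight fun x => Iff.rfl).trans ?_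
    refine ((Equiv.subtypeSubtypeEquivSubtypeInter
        (fun M : Matrix (Fin (n+1) ⊕ Fin 1) (Fin (n+1) ⊕ Fin 1) K => M.IsSymm ∧ IsUnit M)
        (fun M => (M (inr 0) (inr 0), fun j => M (inr 0) (inl j)) = cb)).trans
      (Equiv.subtypeEquivRight fun M => ?_))
    constructor
    · rintro ⟨hp, heq⟩
      exact ⟨hp, fun j => congrFun (congrArg Prod.snd heq) j, congrArg Prod.fst heq⟩
    · rintro ⟨hp, hrow, hc⟩
      exact ⟨hp, Prod.ext hc (funext hrow)⟩
  have hFne : ∀ c : K, c ≠ 0 → ∀ b, F (c, b) = sc K (n+1) := by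
    intro c hc b
    rw [hF]
    exact card_border_ne b c hc
  have hF0 : F (0, 0) = 0 := by
    rw [hF]
    show Nat.card {M : Matrix (Fin (n+1) ⊕ Fin 1) (Fin (n+1) ⊕ Fin 1) K //
      (M.IsSymm ∧ IsUnit M) ∧ (∀ j, M (inr 0) (inl j) = (0 : Fin (n+1) → K) j)
        ∧ M (inr 0) (inr 0) = (0 : K)} = 0
    haveI : IsEmpty {M : Matrix (Fin (n+1) ⊕ Fin 1) (Fin (n+1) ⊕ Fin 1) K //
        (M.IsSymm ∧ IsUnit M) ∧ (∀ j, M (inr 0) (inl j) = (0 : Fin (n+1) → K) j)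
          ∧ M (inr 0) (inr 0) = (0 : K)} := by
      refine ⟨fun M => ?_⟩
      have hdet : M.1.det = 0 := by
        refine Matrix.det_eq_zero_of_row_eq_zero (inr 0) fun j => ?_
        rcases j with j | j
        · exact M.2.2.1 j
        · rw [Subsingleton.elim j 0]; exact M.2.2.2
      have hu := M.2.1.2
      rw [Matrix.isUnit_iff_isUnit_det, hdet, isUnit_iff_ne_zero] at hu
      exact hu rfl
    exact Nat.card_of_isEmpty
  have hFz : ∀ b : Fin (n+1) → K, b ≠ 0 → F (0, b) = Nat.card K ^ (n+1) * sc K n := by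
    intro b hb
    rw [hF]
    exact fiber_zero_card n b hb
  rw [h2, Fintype.sum_prod_type]
  rw [Finset.sum_eq_sum_sdiff_singleton_add (Finset.mem_univ (0 : K))]
  have hsum0 : ∑ b : Fin (n+1) → K, F (0, b)
      = (Nat.card K ^ (n+1) - 1) * (Nat.card K ^ (n+1) * sc K n) := by
    rw [Finset.sum_eq_sum_sdiff_singleton_add (Finset.mem_univ (0 : Fin (n+1) → K)), hF0,
      add_zero]
    rw [Finset.sum_congr rfl (fun b hb => hFz b (by
      simp only [Finset.mem_sdiff, Finset.mem_singleton] at hb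
      exact hb.2))]
    rw [Finset.sum_const, Finset.card_sdiff_of_subset (Finset.singleton_subset_iff.mpr (Finset.mem_univ _)),
      Finset.card_univ, Finset.card_singleton, smul_eq_mul]
    congr 2
    rw [Fintype.card_fun, Fintype.card_fin, Nat.card_eq_fintype_card]
  have hsumne : ∀ c ∈ Finset.univ \ {(0 : K)}, (∑ b : Fin (n+1) → K, F (c, b))
      = Nat.card K ^ (n+1) * sc K (n+1) := by
    intro c hc
    simp only [Finset.mem_sdiff, Finset.mem_singleton] at hc
    rw [Finset.sum_congr rfl fun b _ => hFne c hc.2 b, Finset.sum_const, Finset.card_univ,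
      smul_eq_mul]
    congr 1
    rw [Fintype.card_fun, Fintype.card_fin, Nat.card_eq_fintype_card]
  rw [Finset.sum_congr rfl hsumne, Finset.sum_const,
    Finset.card_sdiff_of_subset (Finset.singleton_subset_iff.mpr (Finset.mem_univ _)),
    Finset.card_univ, Finset.card_singleton, smul_eq_mul, hsum0, Nat.card_eq_fintype_card]

lemma sc_closed (k : ℕ) :
    sc K (2*k) = (Nat.card K)^(k*(k+1)) * ∏ j ∈ range k, ((Nat.card K)^(2*j+1) - 1)
    ∧ sc K (2*k+1) = (Nat.card K)^(k*(k+1)) * ∏ j ∈ range (k+1), ((Nat.card K)^(2*j+1) - 1) := by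
  have hq1 : 1 ≤ Nat.card K := Nat.one_le_iff_ne_zero.mpr (Nat.card_pos).ne'
  induction k with
  | zero =>
    constructor
    · show sc K 0 = _
      rw [sc_zero]; simp
    · show sc K 1 = _
      rw [sc_one]; simp
  | succ k ih =>
    obtain ⟨ihe, iho⟩ := ih
    obtain ⟨d, hd⟩ : ∃ d, Nat.card K = d + 1 := ⟨Nat.card K - 1, by omega⟩
    have hd1 : d + 1 - 1 = d := by omega
    have he : sc K (2*(k+1))
        = (Nat.card K)^((k+1)*(k+2)) * ∏ j ∈ range (k+1), ((Nat.card K)^(2*j+1) - 1) := by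
      have h := sc_rec (K := K) (2*k)
      rw [show 2*(k+1) = 2*k+2 from by ring, h, ihe, iho]
      simp only [Finset.prod_range_succ]
      rw [hd, hd1]
      have hpow : (d+1)^((k+1)*(k+2)) = (d+1)^(k*(k+1)) * (d+1)^(2*k+1) * (d+1) := by
        have h' : (k+1)*(k+2) = k*(k+1)+(2*k+1)+1 := by ring
        rw [h', pow_add, pow_add, pow_one]
      rw [hpow]
      ring
    refine ⟨he, ?_⟩
    have h := sc_rec (K := K) (2*k+1)
    rw [show 2*(k+1)+1 = 2*k+1+2 from by ring, h, show 2*k+1+1 = 2*(k+1) from by ring, he, iho]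
    rw [hd, hd1]
    conv_rhs => rw [Finset.prod_range_succ]
    have hpow2a : (d+1)^((k+1)*(k+2)) = (d+1)^(k*(k+1)) * (d+1)^(2*(k+1)) := by
      rw [← pow_add]
      congr 1
      ring
    have hpow3 : (d+1)^(2*(k+1)+1) = (d+1) * (d+1)^(2*(k+1)) := by
      rw [pow_succ]
      ring
    have hs1 : 1 ≤ (d+1)^(2*(k+1)) := Nat.one_le_pow _ _ (by omega)
    have hinner : d*(d+1)^(2*(k+1)) + ((d+1)^(2*(k+1))-1) = (d+1)*(d+1)^(2*(k+1)) - 1 := by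
      have h' : (d+1)*(d+1)^(2*(k+1)) = d*(d+1)^(2*(k+1)) + (d+1)^(2*(k+1)) := by ring
      rw [h']
      generalize d * (d+1)^(2*(k+1)) = D
      omega
    rw [hpow2a, hpow3, ← hinner]
    ring

end SymCnt

open SymCnt in
theorem stmt9 (e m : ℕ) (he : 1 ≤ e) :
    (Even m →
      Nat.card {M : Matrix (Fin m) (Fin m) (GaloisField 2 e) // M.IsSymm ∧ IsUnit M} =
        (2 ^ e) ^ (m * (m + 2) / 4) *
          ∏ j ∈ Finset.range (m / 2), ((2 ^ e) ^ (2 * (j + 1) - 1) - 1)) ∧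
    (Odd m →
      Nat.card {M : Matrix (Fin m) (Fin m) (GaloisField 2 e) // M.IsSymm ∧ IsUnit M} =
        (2 ^ e) ^ ((m ^ 2 - 1) / 4) *
          ∏ j ∈ Finset.range ((m + 1) / 2), ((2 ^ e) ^ (2 * (j + 1) - 1) - 1)) := by
  haveI : Fact (Nat.Prime 2) := ⟨Nat.prime_two⟩
  have hK : Nat.card (GaloisField 2 e) = 2^e := GaloisField.card 2 e (by omega)
  constructor
  · rintro ⟨k, hk⟩
    have hm : m = 2*k := by omega
    subst hm
    have hcl := (SymCnt.sc_closed (K := GaloisField 2 e) k).1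
    rw [hK] at hcl
    show SymCnt.sc (GaloisField 2 e) (2*k) = _
    rw [hcl]
    have hexp : 2*k*(2*k+2)/4 = k*(k+1) := by
      have h4 : 2*k*(2*k+2) = k*(k+1)*4 := by ring
      rw [h4, Nat.mul_div_cancel _ (by norm_num)]
    have hr : 2*k/2 = k := by omega
    rw [hexp, hr]
    refine congrArg _ (Finset.prod_congr rfl fun j _ => ?_)
    have hj : 2*(j+1)-1 = 2*j+1 := by omega
    rw [hj]
  · rintro ⟨k, hk⟩
    have hm : m = 2*k+1 := by omega
    subst hm
    have hcl := (SymCnt.sc_closed (K := GaloisField 2 e) k).2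
    rw [hK] at hcl
    show SymCnt.sc (GaloisField 2 e) (2*k+1) = _
    rw [hcl]
    have hexp : ((2*k+1)^2 - 1)/4 = k*(k+1) := by
      have h4 : (2*k+1)^2 = k*(k+1)*4 + 1 := by ring
      rw [h4]
      simp [Nat.mul_div_cancel _ (show 0 < 4 from by norm_num)]
    have hr : (2*k+1+1)/2 = k+1 := by omega
    rw [hexp, hr]
    refine congrArg _ (Finset.prod_congr rfl fun j _ => ?_)
    have hj : 2*(j+1)-1 = 2*j+1 := by omega
    rw [hj]
end

section
/- Let B be a linear code over F_q where q is a power of a prime p, with F_p ⊆ F_q. Then the dual (over F_p) of the restriction (subfield subcode) B|_{F_p} equals the trace code of the dual: (B|_{F_p})^⊥ = tr(B^⊥), where tr is the trace from F_q to F_p applied coordinatewise. -/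
/-!
For `c ∈ F_p^n` and `x ∈ F_q^n` one has `c · tr(x) = tr(c · x)`. Hence `z` is orthogonal to the
trace code `tr(B^⊥)` iff `tr(α (z · x)) = 0` for all `x ∈ B^⊥` and `α ∈ F_q` (as `B^⊥` is
`F_q`-linear), iff `z · x = 0` for all `x ∈ B^⊥` by nondegeneracy of the trace form, i.e.
`tr(B^⊥)^⊥ = (B^⊥⊥)|_{F_p} = B|_{F_p}`. Taking duals once more gives the theorem.
-/

open Finset
open scoped Classical

namespace LinearCode

section DualCode

variable {K ι : Type*} [Field K] [Fintype ι]

def dualCode (C : Submodule K (ι → K)) : Submodule K (ι → K) :=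
  LinearMap.BilinForm.orthogonal (dotProductBilin K K) C

theorem mem_dualCode {C : Submodule K (ι → K)} {x : ι → K} :
    x ∈ dualCode C ↔ ∀ c ∈ C, x ⬝ᵥ c = 0 := by
  simp only [dualCode, LinearMap.BilinForm.mem_orthogonal_iff, dotProductBilin_apply_apply,
    dotProduct_comm _ x]

theorem dualCode_dualCode (C : Submodule K (ι → K)) : dualCode (dualCode C) = C :=
  LinearMap.BilinForm.orthogonal_orthogonal
    (.ofSeparatingLeft fun x hx => dotProduct_eq_zero x hx)
    (LinearMap.BilinForm.IsSymm.isRefl ⟨fun x y => dotProduct_comm x y⟩) C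

end DualCode

section Restriction

variable {K L ι : Type*} [Field K] [Field L] [Algebra K L] [Fintype ι]

variable (K) in
def subfieldSubcode (C : Submodule L (ι → L)) : Submodule K (ι → K) :=
  (C.restrictScalars K).comap ((Algebra.linearMap K L).compLeft ι)

variable (K) in
noncomputable def traceCode (C : Submodule L (ι → L)) : Submodule K (ι → K) :=
  (C.restrictScalars K).map ((Algebra.trace K L).compLeft ι)

theorem dotProduct_trace (c : ι → K) (x : ι → L) :
    c ⬝ᵥ (Algebra.trace K L ∘ x) = Algebra.trace K L ((algebraMap K L ∘ c) ⬝ᵥ x) := by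
  simp only [dotProduct, map_sum, Function.comp_apply, ← Algebra.smul_def, LinearMap.map_smul,
    smul_eq_mul]

theorem eq_zero_of_forall_trace_mul_eq_zero [FiniteDimensional K L] [Algebra.IsSeparable K L]
    {s : L} (hs : ∀ a : L, Algebra.trace K L (a * s) = 0) : s = 0 :=
  (traceForm_nondegenerate K L).1 s fun a => by
    rw [Algebra.traceForm_apply, mul_comm]; exact hs a

theorem mem_dualCode_traceCode {C : Submodule L (ι → L)} {z : ι → K} :
    z ∈ dualCode (traceCode K C) ↔
      ∀ x ∈ C, Algebra.trace K L ((algebraMap K L ∘ z) ⬝ᵥ x) = 0 := by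
  simp only [mem_dualCode, traceCode, Submodule.mem_map, Submodule.restrictScalars_mem,
    forall_exists_index, and_imp, forall_apply_eq_imp_iff₂]
  exact forall₂_congr fun x _ => by rw [← dotProduct_trace]; rfl

omit [Fintype ι] in
theorem mem_subfieldSubcode {C : Submodule L (ι → L)} {z : ι → K} :
    z ∈ subfieldSubcode K C ↔ algebraMap K L ∘ z ∈ C :=
  Iff.rfl

theorem dualCode_traceCode [FiniteDimensional K L] [Algebra.IsSeparable K L]
    (C : Submodule L (ι → L)) :
    dualCode (traceCode K C) = subfieldSubcode K (dualCode C) := by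
  ext z
  rw [mem_dualCode_traceCode, mem_subfieldSubcode, mem_dualCode]
  refine ⟨fun h x hx => eq_zero_of_forall_trace_mul_eq_zero (K := K) fun a => ?_,
    fun h x hx => by rw [h x hx, map_zero]⟩
  rw [← smul_eq_mul, ← dotProduct_smul]
  exact h (a • x) (C.smul_mem a hx)

theorem dualCode_subfieldSubcode [FiniteDimensional K L] [Algebra.IsSeparable K L]
    (C : Submodule L (ι → L)) :
    dualCode (subfieldSubcode K C) = traceCode K (dualCode C) := by
  rw [← dualCode_dualCode (traceCode K (dualCode C)), dualCode_traceCode, dualCode_dualCode]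

end Restriction

end LinearCode

theorem stmt11_general (p r n : ℕ) [Fact p.Prime]
    (B : Submodule (GaloisField p r) (Fin n → GaloisField p r)) :
    {y : Fin n → ZMod p | ∀ c : Fin n → ZMod p,
        (fun i => algebraMap (ZMod p) (GaloisField p r) (c i)) ∈ B →
          ∑ i, y i * c i = 0} =
      {y : Fin n → ZMod p | ∃ x : Fin n → GaloisField p r,
        (∀ c ∈ B, ∑ i, x i * c i = 0) ∧
          y = fun i => Algebra.trace (ZMod p) (GaloisField p r) (x i)} := by
  ext y
  have h := SetLike.ext_iff.1 (LinearCode.dualCode_subfieldSubcode (K := ZMod p) B) y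
  simp only [LinearCode.mem_dualCode, LinearCode.mem_subfieldSubcode, LinearCode.traceCode,
    Submodule.mem_map, Submodule.restrictScalars_mem] at h
  exact h.trans (exists_congr fun x => and_congr_right fun _ => eq_comm)

theorem stmt11 (p r n : ℕ) [Fact p.Prime] (hr : 1 ≤ r)
    (B : Submodule (GaloisField p r) (Fin n → GaloisField p r)) :
    {y : Fin n → ZMod p | ∀ c : Fin n → ZMod p,
        (fun i => algebraMap (ZMod p) (GaloisField p r) (c i)) ∈ B →
          ∑ i, y i * c i = 0} =
      {y : Fin n → ZMod p | ∃ x : Fin n → GaloisField p r,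
        (∀ c ∈ B, ∑ i, x i * c i = 0) ∧
          y = fun i => Algebra.trace (ZMod p) (GaloisField p r) (x i)} :=
  stmt11_general p r n B
end

section
/- Let q = 2^r with q ≥ 8. If a ∈ F_q satisfies tr(aβ) = 0 for every β ∈ F_q* with tr(β⁻¹) = 0, then a = 0. (Equivalently: the statement fails only for q ∈ {2,4}; the proof uses that q−2 > 2√q − 1 for q ≥ 8 combined with the Weil bound |K(λ;a)| ≤ 2√q.) -/
open Finset
open scoped Classical

/-!
Instead of the Weil bound, an elementary argument. If `a ≠ 0`, the zero sets of `x ↦ tr x⁻¹` and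
`x ↦ tr (a * x)` have the same size, so the hypothesis forces `tr x⁻¹ = tr (a * x)` for all `x`:
the trace of the inverse would be additive. Applied to `u⁻¹ + (u + s)⁻¹` this gives
`tr (u ^ 2 / s) + tr u = tr s` for `u ∉ {0, s}`. Taking `tr s = 1`, the left side is an additive
map `F → 𝔽₂` equal to `1` off `{0, s}`, which is impossible as soon as `q > 4`.
-/

theorem ZMod.two_eq_of_eq_zero_iff {x y : ZMod 2} (h : x = 0 ↔ y = 0) : x = y := by
  revert x y; decide

theorem eq_of_zero_imp_zero_of_card_zeros_le {α : Type*} [Fintype α] {f g : α → ZMod 2}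
    (hfg : ∀ x, f x = 0 → g x = 0) (hcard : #{x | g x = 0} ≤ #{x | f x = 0}) : f = g := by
  have hzeros : univ.filter (f · = 0) = univ.filter (g · = 0) :=
    eq_of_subset_of_card_le (fun x hx => by simpa using hfg x (by simpa using hx)) hcard
  funext x
  exact ZMod.two_eq_of_eq_zero_iff (by simpa using congrArg (x ∈ ·) hzeros)

theorem AddMonoidHom.card_le_four_of_map_eq_one {G : Type*} [AddCommGroup G] [Fintype G]
    (L : G →+ ZMod 2) (s : G) (hL : ∀ u, u ≠ 0 → u ≠ s → L u = 1) : Fintype.card G ≤ 4 := by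
  by_contra! hG
  obtain ⟨u, -, hu⟩ := exists_mem_notMem_of_card_lt_card (s := {0, s}) (t := univ)
    ((card_le_two).trans_lt (by simp; omega))
  obtain ⟨v, -, hv⟩ := exists_mem_notMem_of_card_lt_card (s := {0, s, -u, s - u}) (t := univ)
    ((card_le_four).trans_lt (by simp; omega))
  simp only [mem_insert, mem_singleton, not_or] at hu hv
  have huv := hL (u + v) (fun h => hv.2.2.1 (eq_neg_of_add_eq_zero_right h))
    (fun h => hv.2.2.2 (eq_sub_of_add_eq' h))
  rw [map_add, hL u hu.1 hu.2, hL v hv.1 hv.2.1] at huv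
  exact absurd huv (by decide)

theorem card_filter_inv {G₀ : Type*} [GroupWithZero G₀] [Fintype G₀] (p : G₀ → Prop)
    [DecidablePred p] : #{x | p x⁻¹} = #{x | p x} :=
  card_equiv (Equiv.inv G₀) (by simp)

theorem card_filter_mul_left {G₀ : Type*} [GroupWithZero G₀] [Fintype G₀] {a : G₀} (ha : a ≠ 0)
    (p : G₀ → Prop) [DecidablePred p] : #{x | p (a * x)} = #{x | p x} :=
  card_equiv (Equiv.mulLeft₀ a ha) (by simp)

section Trace

variable {K F : Type*} [Field K] [Field F] [Algebra K F]

local notation "tr" => Algebra.trace K F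

theorem trace_mul_div_add_eq {a : F} (h : ∀ x, tr x⁻¹ = tr (a * x)) {u v : F} (hu : u ≠ 0)
    (hv : v ≠ 0) : tr (u * v / (u + v)) = tr (u + v) :=
  calc tr (u * v / (u + v)) = tr (u⁻¹ + v⁻¹)⁻¹ := by rw [inv_add_inv hu hv, inv_div]
    _ = tr (a * u⁻¹) + tr (a * v⁻¹) := by rw [h, mul_add, map_add]
    _ = tr (u + v) := by rw [← h, ← h, inv_inv, inv_inv, map_add]

theorem trace_sq_div_add_trace_eq [CharP F 2] {a : F} (h : ∀ x, tr x⁻¹ = tr (a * x)) {s u : F}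
    (hs : s ≠ 0) (hu : u ≠ 0) (hus : u ≠ s) : tr (u ^ 2 / s) + tr u = tr s := by
  have hv : u + s ≠ 0 := fun h => hus (CharTwo.add_eq_zero.mp h)
  have key := trace_mul_div_add_eq h hu hv
  rw [← add_assoc, CharTwo.add_self_eq_zero, zero_add] at key
  rw [← map_add, ← key]
  congr 1
  field_simp

end Trace

section TraceModTwo

variable {F : Type*} [Field F] [Fintype F] [Algebra (ZMod 2) F]

local notation "tr" => Algebra.trace (ZMod 2) F

theorem trace_inv_eq_trace_mul {a : F} (ha : a ≠ 0)
    (h : ∀ β : F, β ≠ 0 → tr β⁻¹ = 0 → tr (a * β) = 0) (x : F) : tr x⁻¹ = tr (a * x) := by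
  refine congrFun (eq_of_zero_imp_zero_of_card_zeros_le (f := fun x => tr x⁻¹)
    (g := fun x => tr (a * x)) (fun β hβ => ?_) ?_) x
  · rcases eq_or_ne β 0 with rfl | hβ0
    · simp
    · exact h β hβ0 hβ
  · rw [card_filter_mul_left ha (tr · = 0), card_filter_inv (tr · = 0)]

theorem card_le_four_of_trace_inv_eq_trace_mul [CharP F 2] {a : F}
    (h : ∀ x, tr x⁻¹ = tr (a * x)) : Fintype.card F ≤ 4 := by
  obtain ⟨s, hs⟩ := Algebra.trace_surjective (ZMod 2) F 1
  let L : F →+ ZMod 2 := AddMonoidHom.mk' (fun u => tr (u ^ 2 / s) + tr u) fun u v => by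
    simp only [add_sq', CharTwo.two_eq_zero, zero_mul, add_zero, add_div, map_add]
    ring
  refine L.card_le_four_of_map_eq_one s fun u hu hus => ?_
  have hs0 : s ≠ 0 := by rintro rfl; simp at hs
  simpa [L, hs] using trace_sq_div_add_trace_eq h hs0 hu hus

end TraceModTwo

theorem stmt12 (r : ℕ) (hr : 3 ≤ r) (a : GaloisField 2 r)
    (h : ∀ β : GaloisField 2 r, β ≠ 0 →
      Algebra.trace (ZMod 2) (GaloisField 2 r) β⁻¹ = 0 →
        Algebra.trace (ZMod 2) (GaloisField 2 r) (a * β) = 0) :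
    a = 0 := by
  by_contra ha
  have hcard : Fintype.card (GaloisField 2 r) = 2 ^ r := by
    rw [← Nat.card_eq_fintype_card, GaloisField.card 2 r (by omega)]
  have h8 : 2 ^ 3 ≤ 2 ^ r := Nat.pow_le_pow_right (by norm_num) hr
  have h4 := card_le_four_of_trace_inv_eq_trace_mul (trace_inv_eq_trace_mul ha h)
  omega
end

section
/- Let q = 2^r with q ≥ 8 and let λ be the canonical additive character of F_q. Then Σ_{α ∈ F_q \ {0,1}} λ(a/(α²+α)) = q − 2 holds if and only if a = 0. (Forward direction: if a ≠ 0 then by the identity Σ_{α∈F_q∖{0,1}} λ(a/(α²+α)) = K(λ;a) − 1 and the Weil bound, the sum is at most 2√q − 1 < q − 2.) -/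
/-!
All q − 2 terms are ±1, so the sum equals q − 2 iff tr (a / (α² + α)) = 0 for every α ∉ {0, 1};
no Weil bound is needed to exploit this. By Artin–Schreier, the values α² + α are exactly the
nonzero elements of the hyperplane H = ker tr, so the condition says that the involution
x ↦ a / x of Fˣ maps H ∖ {0} into H, and hence preserves tr. For a ≠ 0 this is impossible:
tr (a / x) + tr (a / (t x)) + tr (a / ((t + 1) x)) = tr (x + t x + (t + 1) x) = 0, while the
left-hand side is tr of a (t² + t + 1) / ((t² + t) x), which runs over all of Fˣ when
t ∉ {0, 1} is not a cube root of unity.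
-/

open Finset
open scoped Classical

theorem exists_ne_zero_pow_three_ne_one {K : Type*} [Field K] [Finite K] (hK : 4 < Nat.card K) :
    ∃ t : K, t ≠ 0 ∧ t ^ 3 ≠ 1 := by
  have := Fintype.ofFinite K
  by_contra! h
  have hsub : (univ : Finset K) ⊆ insert 0 (Polynomial.nthRootsFinset 3 (1 : K)) := fun t _ => by
    rw [mem_insert, Polynomial.mem_nthRootsFinset three_pos]
    exact (em (t = 0)).imp_right (h t)
  have hroots : (Polynomial.nthRootsFinset 3 (1 : K)).card ≤ 3 := by
    rw [Polynomial.nthRootsFinset_def]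
    exact (Multiset.toFinset_card_le _).trans (Polynomial.card_nthRoots 3 1)
  have := (card_le_card hsub).trans (card_insert_le _ _)
  rw [card_univ, ← Nat.card_eq_fintype_card] at this
  omega

section
variable {F : Type*} [Field F] [Algebra (ZMod 2) F]

local notation "T" => Algebra.trace (ZMod 2) F

variable (F) in
def artinSchreier : F →ₗ[ZMod 2] F :=
  (FiniteField.frobeniusAlgHom (ZMod 2) F).toLinearMap + LinearMap.id

@[simp]
theorem artinSchreier_apply (x : F) : artinSchreier F x = x ^ 2 + x := rfl

theorem sq_add_self_eq_zero_iff {x : F} : x ^ 2 + x = 0 ↔ x = 0 ∨ x = 1 := by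
  have : CharP F 2 := charP_of_injective_algebraMap' (ZMod 2) 2
  rw [sq, ← mul_add_one, mul_eq_zero, CharTwo.add_eq_zero]

theorem ker_artinSchreier : LinearMap.ker (artinSchreier F) = (ZMod 2) ∙ (1 : F) := by
  ext x
  rw [LinearMap.mem_ker, artinSchreier_apply, sq_add_self_eq_zero_iff,
    Submodule.mem_span_singleton]
  constructor
  · rintro (rfl | rfl)
    exacts [⟨0, zero_smul _ _⟩, ⟨1, one_smul _ _⟩]
  · rintro ⟨c, rfl⟩
    fin_cases c
    exacts [.inl (zero_smul _ _), .inr (one_smul _ _)]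

-- `x ↦ a / x` permutes the nonzero elements of `ker T`, hence also their complement.
theorem trace_div_eq_trace {a : F} (ha : a ≠ 0) (h : ∀ β : F, β ≠ 0 → T β = 0 → T (a / β) = 0)
    {x : F} (hx : x ≠ 0) : T (a / x) = T x := by
  by_cases hTx : T x = 0
  · rw [hTx, h x hx hTx]
  · have hTax : T (a / x) ≠ 0 := fun h0 => hTx (by simpa [ha] using h _ (div_ne_zero ha hx) h0)
    exact (Fin.eq_one_of_ne_zero _ hTax).trans (Fin.eq_one_of_ne_zero _ hTx).symm

variable [Finite F]

theorem trace_sq (x : F) : T (x ^ 2) = T x :=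
  Algebra.trace_eq_of_algEquiv (FiniteField.frobeniusAlgEquivOfAlgebraic (ZMod 2) F) x

theorem range_artinSchreier : LinearMap.range (artinSchreier F) = LinearMap.ker T := by
  apply Submodule.eq_of_le_of_finrank_eq
  · rintro _ ⟨x, rfl⟩
    rw [LinearMap.mem_ker, artinSchreier_apply, map_add, trace_sq, CharTwo.add_self_eq_zero]
  · have h℘ := LinearMap.finrank_range_add_finrank_ker (artinSchreier F)
    have hT := LinearMap.finrank_range_add_finrank_ker T
    rw [ker_artinSchreier, finrank_span_singleton one_ne_zero] at h℘
    rw [LinearMap.range_eq_top.2 (Algebra.trace_surjective _ _), finrank_top,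
      Module.finrank_self] at hT
    omega

theorem exists_sq_add_self_eq_iff {β : F} : (∃ α, α ^ 2 + α = β) ↔ T β = 0 := by
  rw [← LinearMap.mem_ker, ← range_artinSchreier]
  rfl

theorem forall_sq_add_self_ne_zero_iff {P : F → Prop} :
    (∀ α : F, α ^ 2 + α ≠ 0 → P (α ^ 2 + α)) ↔ ∀ β : F, β ≠ 0 → T β = 0 → P β := by
  constructor
  · intro h β hβ hTβ
    obtain ⟨α, rfl⟩ := exists_sq_add_self_eq_iff.2 hTβ
    exact h α hβ
  · intro h α hα
    exact h _ hα (exists_sq_add_self_eq_iff.1 ⟨α, rfl⟩)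

theorem not_forall_trace_div_eq_trace {a t : F} (ha : a ≠ 0) (ht : t ≠ 0) (ht3 : t ^ 3 ≠ 1) :
    ¬ ∀ x : F, x ≠ 0 → T (a / x) = T x := by
  have : CharP F 2 := charP_of_injective_algebraMap' (ZMod 2) 2
  intro h
  obtain ⟨z, hz⟩ := Algebra.trace_surjective (ZMod 2) F 1
  have hz0 : z ≠ 0 := by rintro rfl; simp at hz
  have h2 : (2 : F) = 0 := CharTwo.two_eq_zero
  obtain ⟨ht1, ht2⟩ : t + 1 ≠ 0 ∧ t * (t + 1) + 1 ≠ 0 := by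
    rw [← mul_ne_zero_iff]
    contrapose! ht3
    linear_combination ht3 - (t * (t + 1) + 1) * h2
  -- In characteristic 2, `1 + 1 / t + 1 / (t + 1) = (t * (t + 1) + 1) / (t * (t + 1))`.
  set x := a * (t * (t + 1) + 1) / (t * (t + 1) * z)
  have hx : x ≠ 0 := by simp [x, *]
  have hsum : a / x + a / (t * x) + a / ((t + 1) * x) = z := by
    simp only [x]
    field_simp
    linear_combination t * h2
  have htr : T x + T (t * x) + T ((t + 1) * x) = 0 := by
    rw [← map_add, ← map_add, ← map_zero T]
    congr 1
    linear_combination ((t + 1) * x) * h2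
  rw [← h x hx, ← h _ (mul_ne_zero ht hx), ← h _ (mul_ne_zero ht1 hx), ← map_add, ← map_add,
    hsum, hz] at htr
  exact one_ne_zero htr

theorem forall_trace_div_eq_zero_iff (hF : 4 < Nat.card F) {a : F} :
    (∀ β : F, β ≠ 0 → T β = 0 → T (a / β) = 0) ↔ a = 0 := by
  constructor
  · intro h
    by_contra ha
    obtain ⟨t, ht, ht3⟩ := exists_ne_zero_pow_three_ne_one hF
    exact not_forall_trace_div_eq_trace ha ht ht3 fun x hx => trace_div_eq_trace ha h hx
  · rintro rfl β - -
    rw [zero_div, map_zero]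

end

theorem lam_le_one {r : ℕ} (x : GaloisField 2 r) : lam r x ≤ 1 := by
  unfold lam
  split_ifs <;> norm_num

theorem lam_eq_one_iff {r : ℕ} {x : GaloisField 2 r} :
    lam r x = 1 ↔ Algebra.trace (ZMod 2) (GaloisField 2 r) x = 0 := by
  unfold lam
  split_ifs <;> simp_all

theorem sum_lam_eq_card_iff {ι : Type*} {r : ℕ} (s : Finset ι) (f : ι → GaloisField 2 r) :
    ∑ i ∈ s, lam r (f i) = s.card ↔
      ∀ i ∈ s, Algebra.trace (ZMod 2) (GaloisField 2 r) (f i) = 0 := by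
  rw [← Nat.smul_one_eq_cast, ← sum_const, sum_eq_sum_iff_of_le fun i _ => lam_le_one (f i)]
  simp only [lam_eq_one_iff]

theorem stmt18 (r : ℕ) (hr : 3 ≤ r) (a : GaloisField 2 r) :
    (∑ α ∈ (Finset.univ \ {0, 1} : Finset (GaloisField 2 r)),
        lam r (a / (α ^ 2 + α)) = 2 ^ r - 2) ↔ a = 0 := by
  have hcard : Nat.card (GaloisField 2 r) = 2 ^ r := GaloisField.card 2 r (by omega)
  have hq : 4 < 2 ^ r := (Nat.pow_le_pow_right two_pos hr).trans_lt' (by norm_num)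
  have hs : ((univ \ {0, 1} : Finset (GaloisField 2 r)).card : ℤ) = 2 ^ r - 2 := by
    rw [card_sdiff_of_subset (subset_univ _), card_univ, Fintype.card_eq_nat_card, hcard,
      card_pair zero_ne_one, Nat.cast_sub (by omega)]
    norm_num
  rw [← hs, sum_lam_eq_card_iff, ← forall_trace_div_eq_zero_iff (hcard ▸ hq),
    ← forall_sq_add_self_ne_zero_iff]
  simp [sq_add_self_eq_zero_iff]
end

section
/- Let n ≥ 2 be even and q = 2^r. Define A₁⁺(n,q) = q^{(5n²−6n)/4} [n choose 1]_q Π_{j=1}^{n/2}(q^{2j−1}−1) and B₁⁺(n,q) = q^{(n−2)²/4} Π_{j=1}^{n/2}(q^{2j}−1). Then for every β ∈ F_q, the quantity N(β) = q^{−1}A₁⁺(n,q)B₁⁺(n,q) + q^{−1}A₁⁺(n,q)·ε(β) is a positive integer, where ε(β) = 1 if β = 0, ε(β) = q+1 if β ≠ 0 and tr(β⁻¹) = 0, and ε(β) = 1−q if β ≠ 0 and tr(β⁻¹) = 1. -/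
open Finset
open scoped Classical

/-!
Write `q = 2 ^ r`. Since `n ≥ 2`, the exponent `(5n² - 6n)/4` of the power of `q` in `A₁⁺(n, q)`
is at least `1`, so `q ∣ A₁⁺(n, q)` and `N(β) = (A₁⁺(n, q) / q) · (B₁⁺(n, q) + ε(β))` is an
integer. It is positive because `A₁⁺(n, q) > 0`, while the factor `q² - 1` of `B₁⁺(n, q)` already
exceeds `q - 1 ≥ -ε(β)`, whatever the trace of `β⁻¹`.
-/

lemma Nat.one_le_five_mul_sq_sub_six_mul_div_four {n : ℕ} (hn : 2 ≤ n) :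
    1 ≤ (5 * n ^ 2 - 6 * n) / 4 := by
  have : 6 * n + 4 ≤ 5 * n ^ 2 := by nlinarith
  omega

lemma Nat.pow_sub_one_div_sub_one_pos {q n : ℕ} (hq : 2 ≤ q) (hn : n ≠ 0) :
    0 < (q ^ n - 1) / (q - 1) := by
  rw [← Nat.geomSum_eq hq]
  exact Finset.sum_pos (fun _ _ => by positivity) (nonempty_range_iff.mpr hn)

lemma Nat.prod_pow_sub_one_pos {ι : Type*} {q : ℕ} (hq : 1 < q) {s : Finset ι} {k : ι → ℕ}
    (hk : ∀ j ∈ s, k j ≠ 0) : 0 < ∏ j ∈ s, (q ^ k j - 1) :=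
  Finset.prod_pos fun j hj => Nat.sub_pos_of_lt (Nat.one_lt_pow (hk j hj) hq)

lemma Nat.sq_le_pow_mul_prod_pow_two_mul_sub_one_add_one {q m : ℕ} (hq : 1 < q) (hm : m ≠ 0)
    (e : ℕ) : q ^ 2 ≤ q ^ e * ∏ j ∈ range m, (q ^ (2 * (j + 1)) - 1) + 1 := by
  obtain ⟨m, rfl⟩ := Nat.exists_eq_succ_of_ne_zero hm
  have hrest : 1 ≤ ∏ j ∈ range m, (q ^ (2 * (j + 1 + 1)) - 1) :=
    Nat.prod_pow_sub_one_pos hq fun _ _ => by omega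
  have hfirst : q ^ 2 ≤ q ^ 2 - 1 + 1 := by have := Nat.one_le_pow 2 q (by omega); omega
  rw [prod_range_succ']
  calc q ^ 2 ≤ 1 * (1 * (q ^ 2 - 1)) + 1 := by simpa using hfirst
    _ ≤ q ^ e * ((∏ j ∈ range m, (q ^ (2 * (j + 1 + 1)) - 1)) * (q ^ (2 * (0 + 1)) - 1)) + 1 := by
      gcongr
      exact Nat.one_le_pow _ _ (by omega)

lemma exists_pos_natCast_mul_eq {q A : ℕ} {x : ℤ} (hA : 0 < A) (hqA : q ∣ A) (hx : 0 < x) :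
    ∃ m : ℕ, 0 < m ∧ (q : ℤ) * m = A * x := by
  obtain ⟨a, rfl⟩ := hqA
  refine ⟨a * x.toNat, Nat.mul_pos (Nat.pos_of_mul_pos_left hA) (by omega), ?_⟩
  push_cast
  rw [Int.toNat_of_nonneg hx.le]
  ring

theorem stmt19_general (r n : ℕ) (hr : 1 ≤ r) (hn : 2 ≤ n) :
    ∀ β : GaloisField 2 r, ∃ m : ℕ, 0 < m ∧
      ((2 ^ r : ℤ)) * m =
        (((2 ^ r) ^ ((5 * n ^ 2 - 6 * n) / 4) * (((2 ^ r) ^ n - 1) / (2 ^ r - 1)) *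
            ∏ j ∈ Finset.range (n / 2), ((2 ^ r) ^ (2 * (j + 1) - 1) - 1) : ℕ) : ℤ) *
          ((((2 ^ r) ^ ((n - 2) ^ 2 / 4) *
              ∏ j ∈ Finset.range (n / 2), ((2 ^ r) ^ (2 * (j + 1)) - 1) : ℕ) : ℤ) +
            (if β = 0 then 1
             else if Algebra.trace (ZMod 2) (GaloisField 2 r) β⁻¹ = 0 then (2 ^ r : ℤ) + 1
             else 1 - (2 ^ r : ℤ))) := by
  intro β
  have hq : 2 ≤ 2 ^ r := Nat.le_self_pow (by omega) 2
  have he := Nat.one_le_five_mul_sq_sub_six_mul_div_four hn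
  rw [show (2 ^ r : ℤ) = ((2 ^ r : ℕ) : ℤ) by norm_cast]
  refine exists_pos_natCast_mul_eq ?_ ?_ ?_
  · refine Nat.mul_pos (Nat.mul_pos (by positivity) ?_) ?_
    · exact Nat.pow_sub_one_div_sub_one_pos hq (by omega)
    · exact Nat.prod_pow_sub_one_pos hq fun _ _ => by omega
  · exact ((dvd_pow_self _ (by omega)).mul_right _).mul_right _
  · have hB := Nat.cast_le (α := ℤ) |>.mpr <|
      Nat.sq_le_pow_mul_prod_pow_two_mul_sub_one_add_one hq (show n / 2 ≠ 0 by omega)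
        ((n - 2) ^ 2 / 4)
    rw [Nat.cast_add, Nat.cast_one, Nat.cast_pow (2 ^ r) 2] at hB
    have hq' : (2 : ℤ) ≤ ((2 ^ r : ℕ) : ℤ) := by exact_mod_cast hq
    split_ifs <;> nlinarith

theorem stmt19 (r n : ℕ) (hr : 1 ≤ r) (hn : 2 ≤ n) (hne : Even n) :
    ∀ β : GaloisField 2 r, ∃ m : ℕ, 0 < m ∧
      ((2 ^ r : ℤ)) * m =
        (((2 ^ r) ^ ((5 * n ^ 2 - 6 * n) / 4) * (((2 ^ r) ^ n - 1) / (2 ^ r - 1)) *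
            ∏ j ∈ Finset.range (n / 2), ((2 ^ r) ^ (2 * (j + 1) - 1) - 1) : ℕ) : ℤ) *
          ((((2 ^ r) ^ ((n - 2) ^ 2 / 4) *
              ∏ j ∈ Finset.range (n / 2), ((2 ^ r) ^ (2 * (j + 1)) - 1) : ℕ) : ℤ) +
            (if β = 0 then 1
             else if Algebra.trace (ZMod 2) (GaloisField 2 r) β⁻¹ = 0 then (2 ^ r : ℤ) + 1
             else 1 - (2 ^ r : ℤ))) :=
  stmt19_general r n hr hn
end
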